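/- In a distribution-confluent PARS, two terminal distributions are convertible (related by the symmetric-reflexive-transitive closure of ↠) if and only if they are equivalent: D₁ (↞∪↠)* D₂ ⟺ D₁ ≈ D₂. -/

import Mathlib

open Relation
open scoped NNReal

abbrev PDist (A : Type) := List (ℝ≥0 × A)

namespace PPARS

variable {A X : Type}

/-- Total weight of a list distribution. -/
def weight (D : PDist A) : ℝ≥0 := (D.map Prod.fst).sum

/-- Scale every weight of a distribution by `α`. -/
def scale (α : ℝ≥0) (D : PDist A) : PDist A := D.map (fun pa => (α * pa.1, pa.2))

open Classical in
/-- Total weight that `D` assigns to the element `a`. -/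
noncomputable def wt (D : PDist A) (a : A) : ℝ≥0 :=
  (D.map (fun pa => if pa.2 = a then pa.1 else 0)).sum

/-- The Flip rule, closed under list contexts. -/
inductive FlipS : PDist A → PDist A → Prop
  | mk (E₁ E₂ : PDist A) (p q : ℝ≥0) (a b : A) :
      FlipS (E₁ ++ [(p,a),(q,b)] ++ E₂) (E₁ ++ [(q,b),(p,a)] ++ E₂)

/-- The Join rule, closed under list contexts. -/
inductive JoinS : PDist A → PDist A → Prop
  | mk (E₁ E₂ : PDist A) (p q : ℝ≥0) (a : A) :
      JoinS (E₁ ++ [(p,a),(q,a)] ++ E₂) (E₁ ++ [(p+q,a)] ++ E₂)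

/-- The Split rule, closed under list contexts. -/
inductive SplitS : PDist A → PDist A → Prop
  | mk (E₁ E₂ : PDist A) (p q : ℝ≥0) (a : A) :
      SplitS (E₁ ++ [(p+q,a)] ++ E₂) (E₁ ++ [(p,a),(q,a)] ++ E₂)

/-- One `∼`-step: congruence closure of Flip, Join and Split. -/
def SimStep (D E : PDist A) : Prop := FlipS D E ∨ JoinS D E ∨ SplitS D E

/-- One Flip-or-Join step. -/
def FJ (D E : PDist A) : Prop := FlipS D E ∨ JoinS D E

/-- Distribution equivalence `≈`. -/
def DEquiv : PDist A → PDist A → Prop := ReflTransGen SimStep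

/-- Parallel evolution `⇒_P` for a PARS relation `R`. -/
inductive PEvol (R : A → PDist A → Prop) : PDist A → PDist A → Prop
  | nil : PEvol R [] []
  | keep {ds ds' : PDist A} (p : ℝ≥0) (a : A) :
      PEvol R ds ds' → PEvol R ((p,a) :: ds) ((p,a) :: ds')
  | evolve {a : A} {D ds ds' : PDist A} (p : ℝ≥0) :
      R a D → PEvol R ds ds' → PEvol R ((p,a) :: ds) (scale p D ++ ds')

/-- Proper parallel evolution `⇒_P¹`: at least one element evolves. -/
inductive PEvol1 (R : A → PDist A → Prop) : PDist A → PDist A → Prop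
  | evolve {a : A} {D ds ds' : PDist A} (p : ℝ≥0) :
      R a D → PEvol R ds ds' → PEvol1 R ((p,a) :: ds) (scale p D ++ ds')
  | keep {ds ds' : PDist A} (p : ℝ≥0) (a : A) :
      PEvol1 R ds ds' → PEvol1 R ((p,a) :: ds) ((p,a) :: ds')

/-- The determinisation relation `↠ = ⇒_P ∪ ≈`. -/
def Red (R : A → PDist A → Prop) (D E : PDist A) : Prop := PEvol R D E ∨ DEquiv D E

/-- `R` defines a PARS: successor distributions are normalised. -/
def IsPARS (R : A → PDist A → Prop) : Prop := ∀ a D, R a D → weight D = 1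

/-- A terminal element has no successor distribution. -/
def Terminal (R : A → PDist A → Prop) (a : A) : Prop := ∀ D, ¬ R a D

/-- A terminal distribution contains only terminal elements. -/
def TerminalD (R : A → PDist A → Prop) (D : PDist A) : Prop := ∀ pa ∈ D, Terminal R pa.2

/-- Classical confluence of a relation. -/
def Confluent (r : X → X → Prop) : Prop :=
  ∀ a b c, ReflTransGen r a b → ReflTransGen r a c →
    ∃ d, ReflTransGen r b d ∧ ReflTransGen r c d

/-- Raw (finite) computation trees. -/
inductive CTree (A : Type) where
  | leaf (a : A)
  | node (a : A) (cs : List (ℝ≥0 × CTree A))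

def CTree.root : CTree A → A
  | .leaf a => a
  | .node a _ => a

/-- `IsTree R t a`: `t` is a computation tree of the PARS `R` with root `a`. -/
inductive IsTree (R : A → PDist A → Prop) : CTree A → A → Prop
  | leaf (a : A) : IsTree R (.leaf a) a
  | node (a : A) (cs : List (ℝ≥0 × CTree A)) :
      R a (cs.map fun x => (x.1, x.2.root)) →
      (∀ x ∈ cs, IsTree R x.2 x.2.root) →
      IsTree R (.node a cs) a

mutual
/-- Support of a computation tree. -/
def supp : CTree A → PDist A
  | .leaf a => [(1, a)]
  | .node _ cs => suppL cs
def suppL : List (ℝ≥0 × CTree A) → PDist A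
  | [] => []
  | (p, t) :: ts => scale p (supp t) ++ suppL ts
end

/-- A tree is maximal when all its leaves are terminal elements. -/
inductive MaximalT (R : A → PDist A → Prop) : CTree A → Prop
  | leaf (a : A) : Terminal R a → MaximalT R (.leaf a)
  | node (a : A) (cs : List (ℝ≥0 × CTree A)) :
      (∀ x ∈ cs, MaximalT R x.2) → MaximalT R (.node a cs)

end PPARS

/-!
Parallel evolution can only fire on non-terminal elements, and `≈` only rearranges, merges
and splits weights, so from a terminal distribution every `↠`-path is a chain of `≈`-steps.
By confluence, two convertible distributions have a common `↠`-reduct; when both are terminal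
they are therefore both equivalent to it.
-/

namespace PPARS

section

variable {A : Type} {R : A → PDist A → Prop} {D E : PDist A}

theorem SimStep.symm (h : SimStep D E) : SimStep E D := by
  rcases h with ⟨E₁, E₂, p, q, a, b⟩ | ⟨E₁, E₂, p, q, a⟩ | ⟨E₁, E₂, p, q, a⟩
  · exact .inl (.mk E₁ E₂ q p b a)
  · exact .inr (.inr (.mk E₁ E₂ p q a))
  · exact .inr (.inl (.mk E₁ E₂ p q a))

theorem DEquiv.symm (h : DEquiv D E) : DEquiv E D :=
  have : Std.Symm (SimStep (A := A)) := ⟨fun _ _ => SimStep.symm⟩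
  ReflTransGen.stdSymm.symm _ _ h

theorem TerminalD.of_simStep (hD : TerminalD R D) (h : SimStep D E) : TerminalD R E := by
  rcases h with ⟨E₁, E₂, p, q, a, b⟩ | ⟨E₁, E₂, p, q, a⟩ | ⟨E₁, E₂, p, q, a⟩ <;>
  · simp only [TerminalD, List.forall_mem_append, List.forall_mem_cons] at hD ⊢
    tauto

theorem TerminalD.of_dequiv (hD : TerminalD R D) (h : DEquiv D E) : TerminalD R E := by
  induction h with
  | refl => exact hD
  | tail _ hstep ih => exact ih.of_simStep hstep

theorem PEvol.eq_of_terminalD (h : PEvol R D E) (hD : TerminalD R D) : E = D := by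
  induction h with
  | nil => rfl
  | keep p a _ ih => rw [ih fun pa hpa => hD pa (List.mem_cons_of_mem _ hpa)]
  | evolve p hr _ _ => exact absurd hr (hD _ List.mem_cons_self _)

theorem Red.dequiv_of_terminalD (h : Red R D E) (hD : TerminalD R D) : DEquiv D E :=
  h.elim (fun hP => hP.eq_of_terminalD hD ▸ .refl) id

theorem dequiv_of_reflTransGen_red (h : ReflTransGen (Red R) D E) (hD : TerminalD R D) :
    DEquiv D E := by
  induction h with
  | refl => exact .refl
  | tail _ hstep ih => exact ih.trans (hstep.dequiv_of_terminalD (hD.of_dequiv ih))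

end

theorem Confluent.join_of_eqvGen {X : Type} {r : X → X → Prop} (hr : Confluent r) {a b : X}
    (hab : EqvGen r a b) : Join (ReflTransGen r) a b :=
  (equivalence_join fun a b c => hr a b c).eqvGen_iff.1 <|
    EqvGen.mono (fun _ c hac => ⟨c, .single hac, .refl⟩) _ _ hab

end PPARS

open PPARS Relation in
/-- In a distribution-confluent PARS, two terminal distributions are `↠`-convertible
iff they are equivalent. -/
theorem terminal_convertible_iff_equiv {A : Type} (R : A → PDist A → Prop)
    (hR : IsPARS R) (hconf : Confluent (Red R)) {D₁ D₂ : PDist A}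
    (h₁ : TerminalD R D₁) (h₂ : TerminalD R D₂) :
    Relation.EqvGen (Red R) D₁ D₂ ↔ DEquiv D₁ D₂ := by
  refine ⟨fun h => ?_, fun h => .rel _ _ (.inr h)⟩
  obtain ⟨E, h₁E, h₂E⟩ := hconf.join_of_eqvGen h
  exact (dequiv_of_reflTransGen_red h₁E h₁).trans (dequiv_of_reflTransGen_red h₂E h₂).symm
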